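/- arXiv:2601.07201 — 4 statements merged into one kernel-verified Lean document; each statement's English description precedes it below -/
import Mathlib

section
/- Split conformal coverage guarantee: let Z₁,…,Z_{n+1} be exchangeable real-valued random variables (nonconformity scores) that are almost surely distinct, and let q̂ be the ⌈(1−α)(n+1)⌉-th smallest value among Z₁,…,Zₙ. Then P(Z_{n+1} ≤ q̂) ≥ 1 − α. -/
open MeasureTheory Set
open scoped Classical
open scoped ENNReal

/-- The `k`-th smallest value (k ≥ 1) among `f 0, …, f (n-1)`. -/
noncomputable def orderStat (n : ℕ) (k : ℕ) (f : Fin n → ℝ) : ℝ :=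
  sInf {t : ℝ | k ≤ (Finset.univ.filter fun i => f i ≤ t).card}

lemma filter_card_perm {n : ℕ} (π : Equiv.Perm (Fin n)) (p : Fin n → Prop)
    [DecidablePred p] [DecidablePred fun i => p (π i)] :
    (Finset.univ.filter fun i => p (π i)).card = (Finset.univ.filter p).card := by
  rw [← Finset.card_image_of_injective (Finset.univ.filter fun i => p (π i)) π.injective]
  congr 1
  ext i
  simp only [Finset.mem_image, Finset.mem_filter, Finset.mem_univ, true_and]
  constructor
  · rintro ⟨j, hj, rfl⟩; exact hj
  · intro hi; exact ⟨π.symm i, by simpa using hi, by simp⟩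

lemma le_orderStat_of_rank_le {n k : ℕ} (hk1 : 0 < k) (hkn : k ≤ n)
    (g : Fin (n + 1) → ℝ)
    (hR : (Finset.univ.filter fun i => g i ≤ g (Fin.last n)).card ≤ k) :
    g (Fin.last n) ≤ orderStat n k (fun i => g i.castSucc) := by
  have hn : 0 < n := lt_of_lt_of_le hk1 hkn
  have hne : (Finset.univ : Finset (Fin n)).Nonempty := ⟨⟨0, hn⟩, Finset.mem_univ _⟩
  rw [orderStat]
  have hSne : Set.Nonempty {t : ℝ | k ≤ (Finset.univ.filter fun i => g (Fin.castSucc i) ≤ t).card} := by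
    refine ⟨Finset.univ.sup' hne (fun i => g i.castSucc), ?_⟩
    have heq : (Finset.univ.filter fun i : Fin n => g (Fin.castSucc i) ≤ Finset.univ.sup' hne (fun i => g i.castSucc)) = Finset.univ := by
      refine Finset.filter_true_of_mem fun i _ => ?_
      exact Finset.le_sup' (fun i => g i.castSucc) (Finset.mem_univ i)
    simp only [Set.mem_setOf_eq, heq, Finset.card_univ, Fintype.card_fin]
    omega
  apply le_csInf hSne
  intro t ht
  simp only [Set.mem_setOf_eq] at ht
  by_contra hlt
  push_neg at hlt
  have hsub : ((Finset.univ.filter fun i : Fin n => g (Fin.castSucc i) ≤ t).image Fin.castSucc)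
      ⊆ (Finset.univ.filter fun i => g i ≤ g (Fin.last n)).erase (Fin.last n) := by
    intro j hj
    simp only [Finset.mem_image, Finset.mem_filter, Finset.mem_univ, true_and] at hj
    obtain ⟨i, hi, rfl⟩ := hj
    exact Finset.mem_erase.mpr ⟨(Fin.castSucc_lt_last i).ne,
      Finset.mem_filter.mpr ⟨Finset.mem_univ _, le_of_lt (lt_of_le_of_lt hi hlt)⟩⟩
  have hcard := Finset.card_le_card hsub
  rw [Finset.card_image_of_injective _ (Fin.castSucc_injective n)] at hcard
  have hlast : Fin.last n ∈ Finset.univ.filter fun i => g i ≤ g (Fin.last n) :=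
    Finset.mem_filter.mpr ⟨Finset.mem_univ _, le_refl _⟩
  have herase := Finset.card_erase_of_mem hlast
  omega

lemma rank_count_ge {n k : ℕ} (hk : k ≤ n + 1)
    (w : Fin (n + 1) → ℝ) (hw : ∀ i j, i ≠ j → w i ≠ w j) :
    k ≤ (Finset.univ.filter fun j =>
      (Finset.univ.filter fun i => w i ≤ w j).card ≤ k).card := by
  set R : Fin (n+1) → ℕ := fun j => (Finset.univ.filter fun i => w i ≤ w j).card with hRdef
  have hmono : ∀ j j', w j < w j' → R j < R j' := by
    intro j j' h
    apply Finset.card_lt_card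
    rw [Finset.ssubset_iff_of_subset]
    · exact ⟨j', Finset.mem_filter.mpr ⟨Finset.mem_univ _, le_refl _⟩,
        fun hc => absurd ((Finset.mem_filter.mp hc).2) (not_le.mpr h)⟩
    · intro i hi
      exact Finset.mem_filter.mpr ⟨Finset.mem_univ _, le_trans (Finset.mem_filter.mp hi).2 h.le⟩
  have hinj : Function.Injective R := by
    intro j j' hjj'
    by_contra hne
    rcases lt_trichotomy (w j) (w j') with h | h | h
    · exact absurd hjj' (hmono _ _ h).ne
    · exact hw j j' hne h
    · exact absurd hjj'.symm (hmono _ _ h).ne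
  have hmem : ∀ j, R j ∈ Finset.Icc 1 (n+1) := by
    intro j
    refine Finset.mem_Icc.mpr ⟨?_, ?_⟩
    · exact Finset.card_pos.mpr ⟨j, Finset.mem_filter.mpr ⟨Finset.mem_univ _, le_refl _⟩⟩
    · exact le_trans (Finset.card_filter_le _ _) (by simp)
  have himg : Finset.univ.image R = Finset.Icc 1 (n+1) := by
    apply Finset.eq_of_subset_of_card_le
    · intro m hm
      obtain ⟨j, _, rfl⟩ := Finset.mem_image.mp hm
      exact hmem j
    · rw [Finset.card_image_of_injective _ hinj]
      simp [Nat.card_Icc]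
  have h1 : (Finset.univ.filter fun j => R j ≤ k).card
      = ((Finset.univ.image R).filter fun m => m ≤ k).card := by
    rw [Finset.filter_image, Finset.card_image_of_injective _ hinj]
  rw [h1, himg]
  have h2 : (Finset.Icc 1 (n+1)).filter (fun m => m ≤ k) = Finset.Icc 1 k := by
    ext m; simp only [Finset.mem_filter, Finset.mem_Icc]; omega
  rw [h2, Nat.card_Icc]
  omega

theorem split_conformal_coverage_lower
    {Ω : Type*} [MeasurableSpace Ω] (P : Measure Ω) [IsProbabilityMeasure P]
    (n : ℕ) (hn : 0 < n) (α : ℝ) (hα : α ∈ Set.Ioo (0 : ℝ) 1)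
    (Z : Fin (n + 1) → Ω → ℝ) (hZ : ∀ i, Measurable (Z i))
    (hexch : ∀ π : Equiv.Perm (Fin (n + 1)),
      Measure.map (fun ω => fun i => Z (π i) ω) P = Measure.map (fun ω => fun i => Z i ω) P)
    (hdist : ∀ᵐ ω ∂P, ∀ i j : Fin (n + 1), i ≠ j → Z i ω ≠ Z j ω)
    (hk : ⌈(1 - α) * (n + 1)⌉₊ ≤ n) :
    1 - α ≤
      (P {ω | Z (Fin.last n) ω ≤
        orderStat n (⌈(1 - α) * (n + 1)⌉₊) (fun i : Fin n => Z i.castSucc ω)}).toReal := by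
  set k := ⌈(1 - α) * (n + 1)⌉₊ with hkdef
  have hα0 : 0 < 1 - α := by have := hα.2; linarith
  have hk1 : 0 < k := Nat.ceil_pos.mpr (by positivity)
  set R : Fin (n+1) → Ω → ℕ :=
    fun j ω => (Finset.univ.filter fun i => Z i ω ≤ Z j ω).card with hRdef
  set A : Fin (n+1) → Set Ω := fun j => {ω | R j ω ≤ k} with hAdef
  have hZvec : Measurable (fun ω => fun i => Z i ω) := measurable_pi_lambda _ hZ
  have hSjmeas : ∀ j : Fin (n+1), MeasurableSet
      {v : Fin (n+1) → ℝ | (Finset.univ.filter fun i => v i ≤ v j).card ≤ k} := by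
    intro j
    have hF : Measurable (fun v : Fin (n+1) → ℝ =>
        (Finset.univ.filter fun i => v i ≤ v j).card) := by
      have heq : (fun v : Fin (n+1) → ℝ => (Finset.univ.filter fun i => v i ≤ v j).card)
          = fun v => ∑ i : Fin (n+1), if v i ≤ v j then 1 else 0 := by
        funext v; rw [Finset.card_filter]
      rw [heq]
      exact Finset.measurable_sum _ fun i _ =>
        Measurable.ite (measurableSet_le (measurable_pi_apply i) (measurable_pi_apply j))
          measurable_const measurable_const
    exact hF measurableSet_Iic
  have hAmeas : ∀ j, MeasurableSet (A j) := fun j => hZvec (hSjmeas j)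
  -- exchangeability: all A j have the same probability
  have hPA : ∀ j, P (A j) = P (A (Fin.last n)) := by
    intro j
    set π : Equiv.Perm (Fin (n+1)) := Equiv.swap j (Fin.last n) with hπ
    have h1 : A j = (fun ω => fun i => Z i ω) ⁻¹'
        {v : Fin (n+1) → ℝ | (Finset.univ.filter fun i => v i ≤ v j).card ≤ k} := rfl
    have h2 : A (Fin.last n) = (fun ω => fun i => Z (π i) ω) ⁻¹'
        {v : Fin (n+1) → ℝ | (Finset.univ.filter fun i => v i ≤ v j).card ≤ k} := by
      ext ω
      simp only [Set.mem_preimage, Set.mem_setOf_eq, hAdef, hRdef]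
      rw [filter_card_perm π (fun i => Z i ω ≤ Z (π j) ω)]
      have : π j = Fin.last n := Equiv.swap_apply_left _ _
      rw [this]
    have hZvec' : Measurable (fun ω => fun i => Z (π i) ω) :=
      measurable_pi_lambda _ fun i => hZ (π i)
    rw [h1, h2, ← Measure.map_apply hZvec (hSjmeas j),
      ← Measure.map_apply hZvec' (hSjmeas j), hexch π]
  -- sum of probabilities is at least k
  have hsum : (k : ℝ≥0∞) ≤ ∑ j : Fin (n+1), P (A j) := by
    have hN : ∀ᵐ ω ∂P, (k : ℝ≥0∞) ≤ ∑ j : Fin (n+1), (A j).indicator (1 : Ω → ℝ≥0∞) ω := by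
      filter_upwards [hdist] with ω hω
      have hcount := rank_count_ge (by omega : k ≤ n+1) (fun i => Z i ω) hω
      have hNval : ∑ j : Fin (n+1), (A j).indicator (1 : Ω → ℝ≥0∞) ω
          = ((Finset.univ.filter fun j => R j ω ≤ k).card : ℝ≥0∞) := by
        rw [Finset.card_filter]
        push_cast
        refine Finset.sum_congr rfl fun j _ => ?_
        by_cases h : R j ω ≤ k
        · simp [Set.indicator_apply, hAdef, h]
        · simp [Set.indicator_apply, hAdef, h]
      rw [hNval]
      exact_mod_cast hcount
    calc (k : ℝ≥0∞) = ∫⁻ _, (k : ℝ≥0∞) ∂P := by simp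
      _ ≤ ∫⁻ ω, ∑ j : Fin (n+1), (A j).indicator (1 : Ω → ℝ≥0∞) ω ∂P := lintegral_mono_ae hN
      _ = ∑ j : Fin (n+1), ∫⁻ ω, (A j).indicator (1 : Ω → ℝ≥0∞) ω ∂P :=
          lintegral_finset_sum _ fun j _ => measurable_one.indicator (hAmeas j)
      _ = ∑ j : Fin (n+1), P (A j) := by
          refine Finset.sum_congr rfl fun j _ => ?_
          exact lintegral_indicator_one (hAmeas j)
  have hsum' : (k : ℝ≥0∞) ≤ ((n+1 : ℕ) : ℝ≥0∞) * P (A (Fin.last n)) := by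
    calc (k : ℝ≥0∞) ≤ ∑ j : Fin (n+1), P (A j) := hsum
      _ = ∑ _j : Fin (n+1), P (A (Fin.last n)) := Finset.sum_congr rfl fun j _ => hPA j
      _ = ((n+1 : ℕ) : ℝ≥0∞) * P (A (Fin.last n)) := by
          rw [Finset.sum_const, Finset.card_univ, Fintype.card_fin, nsmul_eq_mul]
  -- pointwise inclusion
  set T := {ω | Z (Fin.last n) ω ≤ orderStat n k fun i : Fin n => Z i.castSucc ω} with hT
  have hincl : A (Fin.last n) ⊆ T := fun ω hω =>
    le_orderStat_of_rank_le hk1 hk (fun i => Z i ω) hω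
  have hPT : (k : ℝ≥0∞) ≤ ((n+1 : ℕ) : ℝ≥0∞) * P T :=
    le_trans hsum' (mul_le_mul_right (measure_mono hincl) _)
  have hfin : ((n+1 : ℕ) : ℝ≥0∞) * P T ≠ ⊤ :=
    ENNReal.mul_ne_top (ENNReal.natCast_ne_top _) (measure_ne_top P T)
  have hreal : (k : ℝ) ≤ ((n : ℝ) + 1) * (P T).toReal := by
    have h := ENNReal.toReal_mono hfin hPT
    rw [ENNReal.toReal_mul, ENNReal.toReal_natCast, ENNReal.toReal_natCast] at h
    push_cast at h ⊢
    linarith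
  have hceil : (1 - α) * ((n : ℝ) + 1) ≤ (k : ℝ) := Nat.le_ceil _
  have hn1 : (0:ℝ) < (n : ℝ) + 1 := by positivity
  have hfinal : (1 - α) * ((n : ℝ) + 1) ≤ ((n : ℝ) + 1) * (P T).toReal :=
    le_trans hceil hreal
  have : ((n:ℝ)+1) * (1 - α) ≤ ((n:ℝ)+1) * (P T).toReal := by linarith
  exact le_of_mul_le_mul_left this hn1
end

section
/- Split conformal coverage upper bound: under the same exchangeability and almost-sure distinctness assumptions, P(Z_{n+1} ≤ q̂) ≤ 1 − α + 1/(n+1), where q̂ is the ⌈(1−α)(n+1)⌉-th order statistic of Z₁,…,Zₙ. -/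
open MeasureTheory Set
open scoped Classical

/-!
Let `R j` be the number of `Z i` strictly below `Z j`. The event `Z_{n+1} ≤ q̂` is exactly
`R (n+1) < k`, where `k = ⌈(1-α)(n+1)⌉`. Almost surely the `Z i` are distinct, so
`j ↦ R j` is a permutation of `{0, …, n}` and exactly `k` indices have `R j < k`;
by exchangeability all these events have the same probability, which is therefore
`k / (n+1) ≤ 1 - α + 1/(n+1)`.
-/

open scoped Finset

section Rank

variable {ι α : Type*} [Fintype ι] [LinearOrder α]

def countLT (v : ι → α) (x : α) : ℕ := #{i | v i < x}

lemma countLT_lt_countLT {v : ι → α} {i : ι} {x : α} (h : v i < x) :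
    countLT v (v i) < countLT v x := by
  refine Finset.card_lt_card ((Finset.ssubset_iff_of_subset ?_).2 ⟨i, by simpa using h, by simp⟩)
  intro j
  simp only [Finset.mem_filter, Finset.mem_univ, true_and]
  exact fun hj => hj.trans h

lemma countLT_apply_lt_card (v : ι → α) (j : ι) : countLT v (v j) < Fintype.card ι :=
  Finset.card_lt_card (Finset.filter_ssubset.2 ⟨j, Finset.mem_univ j, lt_irrefl _⟩)

lemma countLT_apply_injective {v : ι → α} (hv : Function.Injective v) :
    Function.Injective fun j => countLT v (v j) := by
  intro i j h
  by_contra hij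
  rcases (hv.ne hij).lt_or_gt with hlt | hlt
  · exact (countLT_lt_countLT hlt).ne h
  · exact (countLT_lt_countLT hlt).ne' h

lemma card_countLT_apply_lt {v : ι → α} (hv : Function.Injective v) {k : ℕ}
    (hk : k ≤ Fintype.card ι) : #{j | countLT v (v j) < k} = k := by
  let r : ι → Fin (Fintype.card ι) := fun j => ⟨countLT v (v j), countLT_apply_lt_card v j⟩
  have hr : Function.Bijective r := (Fintype.bijective_iff_injective_and_card r).2
    ⟨fun i j h => countLT_apply_injective hv (Fin.val_eq_of_eq h), by simp⟩
  calc #{j | countLT v (v j) < k} = #{a : Fin (Fintype.card ι) | (a : ℕ) < k} :=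
        Finset.card_equiv (Equiv.ofBijective r hr) (by simp [r])
    _ = k := by rw [Fin.card_filter_val_lt, min_eq_right hk]

lemma countLT_comp_perm (v : ι → α) (π : Equiv.Perm ι) (x : α) :
    countLT (fun i => v (π i)) x = countLT v x :=
  Finset.card_equiv π (by simp)

lemma countLT_castSucc_last {n : ℕ} (v : Fin (n + 1) → α) :
    countLT (fun i : Fin n => v i.castSucc) (v (Fin.last n)) = countLT v (v (Fin.last n)) := by
  simp only [countLT, Finset.card_filter, Fin.sum_univ_castSucc, lt_irrefl, if_false, add_zero]

end Rank

lemma le_orderStat_iff {n k : ℕ} {f : Fin n → ℝ} {x : ℝ} (hk : 1 ≤ k) (hkn : k ≤ n) :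
    x ≤ orderStat n k f ↔ countLT f x < k := by
  set S : Set ℝ := {t | k ≤ #{i | f i ≤ t}}
  have hS_nonempty : S.Nonempty := by
    obtain ⟨M, hM⟩ := (Set.finite_range f).bddAbove
    refine ⟨M, ?_⟩
    simpa [S, Finset.filter_true_of_mem fun i _ => hM (mem_range_self i)] using hkn
  have hS_bddBelow : BddBelow S := by
    obtain ⟨m, hm⟩ := (Set.finite_range f).bddBelow
    refine ⟨m, fun t ht => ?_⟩
    obtain ⟨i, hi⟩ := Finset.card_pos.1 (hk.trans ht)
    exact (hm (mem_range_self i)).trans (Finset.mem_filter.1 hi).2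
  constructor
  · intro hx
    by_contra! hcount
    -- the finitely many values below `x` are all `≤ t` for some `t < x`
    have hbelow : ∀ i, ∀ᶠ t in nhdsWithin x (Iio x), f i < x → f i ≤ t := by
      intro i
      by_cases hi : f i < x
      · exact (eventually_nhdsWithin_of_eventually_nhds (eventually_gt_nhds hi)).mono
          fun t ht _ => ht.le
      · exact Filter.Eventually.of_forall fun t h => absurd h hi
    obtain ⟨t, ht, htx⟩ := ((Filter.eventually_all.2 hbelow).and self_mem_nhdsWithin).exists
    have htS : t ∈ S :=
      hcount.trans (Finset.card_le_card (Finset.monotone_filter_right _ fun i _ => ht i))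
    exact (csInf_le hS_bddBelow htS).trans_lt htx |>.not_ge hx
  · intro hcount
    refine le_csInf hS_nonempty fun t ht => ?_
    by_contra! htx
    have : #{i | f i ≤ t} ≤ countLT f x :=
      Finset.card_le_card (Finset.monotone_filter_right _ fun i _ hi => hi.trans_lt htx)
    exact (ht.trans this).not_gt hcount

section Exchangeable

variable {Ω ι : Type*} [MeasurableSpace Ω] {P : Measure Ω} [Fintype ι]

lemma sum_measure_eq_of_ae_card_eq [IsProbabilityMeasure P] {E : ι → Set Ω}
    (hE : ∀ j, MeasurableSet (E j)) {k : ℕ} (h : ∀ᵐ ω ∂P, #{j | ω ∈ E j} = k) :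
    ∑ j, P (E j) = k := by
  calc ∑ j, P (E j) = ∑ j, ∫⁻ ω, (E j).indicator 1 ω ∂P := by
        simp only [lintegral_indicator_one (hE _)]
    _ = ∫⁻ ω, ∑ j, (E j).indicator 1 ω ∂P :=
        (lintegral_finsetSum _ fun j _ => measurable_one.indicator (hE j)).symm
    _ = ∫⁻ _, (k : ENNReal) ∂P := lintegral_congr_ae <| h.mono fun ω hω => by
        simp [← hω, Set.indicator_apply]
    _ = k := by simp

variable {Z : ι → Ω → ℝ}

lemma measurable_countLT_apply (j : ι) : Measurable fun v : ι → ℝ => countLT v (v j) := by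
  simp only [countLT, Finset.card_filter]
  exact Finset.measurable_sum _ fun i _ => Measurable.ite
    (measurableSet_lt (measurable_pi_apply i) (measurable_pi_apply j)) measurable_const
    measurable_const

variable (hZ : ∀ i, Measurable (Z i))
  (hexch : ∀ π : Equiv.Perm ι,
    Measure.map (fun ω i => Z (π i) ω) P = Measure.map (fun ω i => Z i ω) P)
include hZ hexch

lemma measure_countLT_apply_lt_eq (k : ℕ) (i j : ι) :
    P {ω | countLT (Z · ω) (Z i ω) < k} = P {ω | countLT (Z · ω) (Z j ω) < k} := by
  let S : Set (ι → ℝ) := {v | countLT v (v j) < k}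
  have hS : MeasurableSet S := measurable_countLT_apply j measurableSet_Iio
  have hswap : {ω | countLT (Z · ω) (Z i ω) < k}
      = (fun ω i' => Z (Equiv.swap i j i') ω) ⁻¹' S := by
    ext ω
    simp [S, countLT_comp_perm (Z · ω)]
  rw [hswap, ← Measure.map_apply (measurable_pi_lambda _ fun i' => hZ _) hS, hexch,
    Measure.map_apply (measurable_pi_lambda _ hZ) hS]
  rfl

lemma measureReal_countLT_apply_lt [IsProbabilityMeasure P]
    (hinj : ∀ᵐ ω ∂P, Function.Injective (Z · ω)) {k : ℕ} (hk : k ≤ Fintype.card ι) (j : ι) :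
    P.real {ω | countLT (Z · ω) (Z j ω) < k} = k / Fintype.card ι := by
  have hE : ∀ i, MeasurableSet {ω | countLT (Z · ω) (Z i ω) < k} := fun i =>
    (measurable_countLT_apply i).comp (measurable_pi_lambda _ hZ) measurableSet_Iio
  have hsum := sum_measure_eq_of_ae_card_eq hE
    (hinj.mono fun ω hω => by simpa using card_countLT_apply_lt hω hk)
  rw [Finset.sum_congr rfl fun i _ => measure_countLT_apply_lt_eq hZ hexch k i j,
    Finset.sum_const, Finset.card_univ, nsmul_eq_mul] at hsum
  have hcard : (Fintype.card ι : ℝ) ≠ 0 :=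
    Nat.cast_ne_zero.2 (Fintype.card_pos_iff.2 ⟨j⟩).ne'
  rw [measureReal_def, eq_div_iff hcard, mul_comm]
  simpa using congrArg ENNReal.toReal hsum

end Exchangeable

theorem split_conformal_coverage_upper_general
    {Ω : Type*} [MeasurableSpace Ω] (P : Measure Ω) [IsProbabilityMeasure P]
    (n : ℕ) (α : ℝ) (hα : α ∈ Set.Ioo (0 : ℝ) 1)
    (Z : Fin (n + 1) → Ω → ℝ) (hZ : ∀ i, Measurable (Z i))
    (hexch : ∀ π : Equiv.Perm (Fin (n + 1)),
      Measure.map (fun ω => fun i => Z (π i) ω) P = Measure.map (fun ω => fun i => Z i ω) P)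
    (hdist : ∀ᵐ ω ∂P, ∀ i j : Fin (n + 1), i ≠ j → Z i ω ≠ Z j ω)
    (hk : ⌈(1 - α) * (n + 1)⌉₊ ≤ n) :
    (P {ω | Z (Fin.last n) ω ≤
        orderStat n (⌈(1 - α) * (n + 1)⌉₊) (fun i : Fin n => Z i.castSucc ω)}).toReal ≤
      1 - α + 1 / (n + 1) := by
  set k := ⌈(1 - α) * (n + 1)⌉₊
  have hpos : 0 < (1 - α) * (n + 1) := mul_pos (by linarith [hα.2]) (by positivity)
  have hk1 : 1 ≤ k := Nat.one_le_iff_ne_zero.2 (Nat.ceil_pos.2 hpos).ne'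
  have hevent : {ω | Z (Fin.last n) ω ≤ orderStat n k (fun i : Fin n => Z i.castSucc ω)}
      = {ω | countLT (Z · ω) (Z (Fin.last n) ω) < k} := by
    ext ω
    simp only [mem_ofPred_eq, le_orderStat_iff hk1 hk, countLT_castSucc_last (Z · ω)]
  have hinj : ∀ᵐ ω ∂P, Function.Injective (Z · ω) :=
    hdist.mono fun ω hω i j => not_imp_not.1 (hω i j)
  rw [hevent, ← measureReal_def, measureReal_countLT_apply_lt hZ hexch hinj
    (by simpa using hk.trans n.le_succ) (Fin.last n), Fintype.card_fin]
  calc (k : ℝ) / ↑(n + 1) ≤ ((1 - α) * (n + 1) + 1) / (n + 1) := by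
        push_cast
        gcongr
        exact (Nat.ceil_lt_add_one hpos.le).le
    _ = 1 - α + 1 / (n + 1) := by field_simp

theorem split_conformal_coverage_upper
    {Ω : Type*} [MeasurableSpace Ω] (P : Measure Ω) [IsProbabilityMeasure P]
    (n : ℕ) (hn : 0 < n) (α : ℝ) (hα : α ∈ Set.Ioo (0 : ℝ) 1)
    (Z : Fin (n + 1) → Ω → ℝ) (hZ : ∀ i, Measurable (Z i))
    (hexch : ∀ π : Equiv.Perm (Fin (n + 1)),
      Measure.map (fun ω => fun i => Z (π i) ω) P = Measure.map (fun ω => fun i => Z i ω) P)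
    (hdist : ∀ᵐ ω ∂P, ∀ i j : Fin (n + 1), i ≠ j → Z i ω ≠ Z j ω)
    (hk : ⌈(1 - α) * (n + 1)⌉₊ ≤ n) :
    (P {ω | Z (Fin.last n) ω ≤
        orderStat n (⌈(1 - α) * (n + 1)⌉₊) (fun i : Fin n => Z i.castSucc ω)}).toReal ≤
      1 - α + 1 / (n + 1) :=
  split_conformal_coverage_upper_general P n α hα Z hZ hexch hdist hk
end

section
/- For exchangeable, almost surely distinct random variables Z₁,…,Z_{n+1}, the rank of Z_{n+1} among all n+1 variables is uniformly distributed on {1,2,…,n+1}; i.e., P(rank(Z_{n+1}) = k) = 1/(n+1) for each k. -/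
/-!
Write `R_j` for the rank of `Z_j`. A transposition of coordinates `j` and `n + 1` carries the
event `{R_{n+1} = k}` to `{R_j = k}`, so by exchangeability all `n + 1` events have the same
probability. On the almost sure event that the values are distinct the ranks are a permutation of
`1, …, n + 1`, so exactly one of these events occurs: they partition `Ω` up to a null set, and each
has probability `1 / (n + 1)`.
-/

open MeasureTheory Function Finset
open scoped ENNReal

def coordRank {ι α : Type*} [Fintype ι] [LinearOrder α] (v : ι → α) (j : ι) : ℕ :=
  #{i | v i ≤ v j}

section CoordRank

variable {ι α : Type*} [Fintype ι] [LinearOrder α]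

lemma coordRank_comp_perm (v : ι → α) (π : Equiv.Perm ι) (j : ι) :
    coordRank (v ∘ π) j = coordRank v (π j) :=
  card_equiv π (by simp)

lemma one_le_coordRank (v : ι → α) (j : ι) : 1 ≤ coordRank v j :=
  card_pos.2 ⟨j, by simp⟩

lemma coordRank_le_card (v : ι → α) (j : ι) : coordRank v j ≤ Fintype.card ι :=
  card_le_univ _

lemma coordRank_lt_coordRank_of_lt {v : ι → α} {i j : ι} (h : v i < v j) :
    coordRank v i < coordRank v j :=
  card_lt_card <| (ssubset_iff_of_subset (monotone_filter_right _ fun _ _ hk => hk.trans h.le)).2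
    ⟨j, by simp, by simpa using h⟩

lemma coordRank_injective {v : ι → α} (hv : Injective v) : Injective (coordRank v) :=
  fun _ _ h => hv <| le_antisymm (not_lt.1 fun hlt => (coordRank_lt_coordRank_of_lt hlt).ne' h)
    (not_lt.1 fun hlt => (coordRank_lt_coordRank_of_lt hlt).ne h)

lemma image_coordRank_of_injective {v : ι → α} (hv : Injective v) :
    univ.image (coordRank v) = Icc 1 (Fintype.card ι) :=
  eq_of_subset_of_card_le
    (fun _ hk => by
      obtain ⟨j, -, rfl⟩ := mem_image.1 hk
      exact mem_Icc.2 ⟨one_le_coordRank v j, coordRank_le_card v j⟩)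
    (by rw [Nat.card_Icc, card_image_of_injective _ (coordRank_injective hv),
      add_tsub_cancel_right, card_univ])

lemma exists_coordRank_eq_of_injective {v : ι → α} (hv : Injective v) {k : ℕ} (hk₁ : 1 ≤ k)
    (hk₂ : k ≤ Fintype.card ι) : ∃ j, coordRank v j = k := by
  simpa using (image_coordRank_of_injective hv).ge (mem_Icc.2 ⟨hk₁, hk₂⟩)

lemma measurable_coordRank [MeasurableSpace α] [TopologicalSpace α] [OpensMeasurableSpace α]
    [OrderClosedTopology α] [SecondCountableTopology α] (j : ι) :
    Measurable fun v : ι → α => coordRank v j := by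
  simp_rw [coordRank, card_filter]
  exact Finset.measurable_sum _ fun i _ => Measurable.ite
    (measurableSet_le (measurable_pi_apply i) (measurable_pi_apply j)) measurable_const
    measurable_const

end CoordRank

lemma measure_eq_inv_card_of_aePartition {Ω ι : Type*} [MeasurableSpace Ω] [Fintype ι]
    (μ : Measure Ω) [IsProbabilityMeasure μ] {E : ι → Set Ω}
    (hmeas : ∀ i, NullMeasurableSet (E i) μ) (hdisj : Pairwise (AEDisjoint μ on E))
    (hcover : ∀ᵐ ω ∂μ, ω ∈ ⋃ i, E i) (heq : ∀ i j, μ (E i) = μ (E j)) (i : ι) :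
    μ (E i) = (Fintype.card ι : ℝ≥0∞)⁻¹ := by
  have hsum : ∑ j, μ (E j) = 1 := by
    rw [← tsum_fintype (L := .unconditional _), ← measure_iUnion₀ hdisj hmeas]
    exact (prob_compl_eq_zero_iff₀ (.iUnion hmeas)).1 hcover
  simp only [heq _ i, sum_const, card_univ, nsmul_eq_mul] at hsum
  exact ENNReal.eq_inv_of_mul_eq_one_left (by rwa [mul_comm] at hsum)

def Exchangeable {Ω ι α : Type*} [MeasurableSpace Ω] [MeasurableSpace α]
    (μ : Measure Ω) (X : Ω → ι → α) : Prop :=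
  ∀ π : Equiv.Perm ι, μ.map (fun ω => X ω ∘ π) = μ.map X

section Exchangeable

variable {Ω ι α : Type*} [MeasurableSpace Ω] [Fintype ι] [LinearOrder α] [MeasurableSpace α]
  [TopologicalSpace α] [OpensMeasurableSpace α] [OrderClosedTopology α]
  [SecondCountableTopology α] {μ : Measure Ω} {X : Ω → ι → α}

lemma Exchangeable.measure_coordRank_eq (hexch : Exchangeable μ X) (hX : Measurable X) (k : ℕ)
    (i j : ι) : μ {ω | coordRank (X ω) i = k} = μ {ω | coordRank (X ω) j = k} := by
  classical
  let S : Set (ι → α) := {v | coordRank v j = k}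
  have hS : MeasurableSet S := measurable_coordRank j (measurableSet_singleton k)
  have hXπ : Measurable fun ω => X ω ∘ Equiv.swap i j :=
    measurable_pi_lambda _ fun l => measurable_pi_apply _ |>.comp hX
  have hpre : {ω | coordRank (X ω) i = k} = (fun ω => X ω ∘ Equiv.swap i j) ⁻¹' S := by
    ext ω
    simp [S, coordRank_comp_perm]
  rw [hpre, ← Measure.map_apply hXπ hS, hexch, Measure.map_apply hX hS]
  rfl

theorem Exchangeable.measure_coordRank_eq_inv_card [IsProbabilityMeasure μ]
    (hexch : Exchangeable μ X) (hX : Measurable X) (hinj : ∀ᵐ ω ∂μ, Injective (X ω)) {k : ℕ}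
    (hk₁ : 1 ≤ k) (hk₂ : k ≤ Fintype.card ι) (j : ι) :
    μ {ω | coordRank (X ω) j = k} = (Fintype.card ι : ℝ≥0∞)⁻¹ := by
  refine measure_eq_inv_card_of_aePartition μ
    (fun i => (hX (measurable_coordRank i (measurableSet_singleton k))).nullMeasurableSet)
    (fun i i' hii' => measure_mono_null ?_ (ae_iff.1 hinj))
    (hinj.mono fun ω hω => Set.mem_iUnion.2 (exists_coordRank_eq_of_injective hω hk₁ hk₂))
    (hexch.measure_coordRank_eq hX k) j
  rintro ω ⟨hi, hi'⟩ hω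
  exact hii' (coordRank_injective hω (hi.trans hi'.symm))

end Exchangeable

theorem rank_of_last_uniform
    {Ω : Type*} [MeasurableSpace Ω] (P : Measure Ω) [IsProbabilityMeasure P]
    (n : ℕ) (Z : Fin (n + 1) → Ω → ℝ) (hZ : ∀ i, Measurable (Z i))
    (hexch : ∀ π : Equiv.Perm (Fin (n + 1)),
      Measure.map (fun ω => fun i => Z (π i) ω) P = Measure.map (fun ω => fun i => Z i ω) P)
    (hdist : ∀ᵐ ω ∂P, ∀ i j : Fin (n + 1), i ≠ j → Z i ω ≠ Z j ω) :
    ∀ k : ℕ, 1 ≤ k → k ≤ n + 1 →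
      (P {ω | (Finset.univ.filter fun i : Fin (n + 1) =>
          Z i ω ≤ Z (Fin.last n) ω).card = k}).toReal = 1 / (n + 1) := by
  intro k hk₁ hk₂
  have hinj : ∀ᵐ ω ∂P, Injective fun i => Z i ω :=
    hdist.mono fun ω h i j hij => not_not.1 fun hne => h i j hne hij
  have h := Exchangeable.measure_coordRank_eq_inv_card (X := fun ω i => Z i ω) hexch
    (measurable_pi_lambda _ hZ) hinj hk₁ (by simpa using hk₂) (Fin.last n)
  simp only [coordRank] at h
  rw [h, Fintype.card_fin, ENNReal.toReal_inv, ENNReal.toReal_natCast, one_div, Nat.cast_succ]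
end

section
/- Smoothed indicator shift bound: let s : X → ℝ be L-Lipschitz, P, Q probability measures on X with W₁(P,Q) ≤ ε, and let t ∈ ℝ, h > 0. Then Q(s > t + h) ≤ P(s > t) + Lε/h. In particular, worst-case exceedance over the Wasserstein ball of radius ε is controlled by the calibration-distribution exceedance at a slightly smaller threshold plus Lε/h. -/
/-!
Sandwich the indicator of `{s > t + h}` below and that of `{s > t}` above by `ramp t h ∘ s`,
where the ramp rises linearly from `0` at `t` to `1` at `t + h`. It is `(L / h)`-Lipschitz,
so Kantorovich–Rubinstein duality moves its integral from `Q` to `P` at a cost of `L ε / h`.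
-/

open MeasureTheory

noncomputable def ramp (t h u : ℝ) : ℝ := max 0 (min 1 ((u - t) / h))

lemma lipschitzWith_ramp (t h : ℝ) : LipschitzWith ‖h‖₊⁻¹ (ramp t h) := by
  have hlin : LipschitzWith ‖h‖₊⁻¹ fun u : ℝ => (u - t) / h := by
    simpa [Function.comp_def, div_eq_inv_mul, sub_eq_add_neg] using
      (lipschitzWith_smul h⁻¹).comp (isometry_add_right (-t)).lipschitz
  exact (hlin.const_min 1).const_max 0

lemma abs_ramp_le_one (t h u : ℝ) : |ramp t h u| ≤ 1 :=
  abs_le.2 ⟨by unfold ramp; linarith [le_max_left 0 (min 1 ((u - t) / h))],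
    max_le zero_le_one (min_le_left _ _)⟩

lemma indicator_Ioi_add_le_ramp {h : ℝ} (hh : 0 < h) (t u : ℝ) :
    (Set.Ioi (t + h)).indicator 1 u ≤ ramp t h u := by
  by_cases hu : t + h < u
  · have : 1 ≤ (u - t) / h := by rw [le_div_iff₀ hh]; linarith
    simp [Set.indicator_of_mem (Set.mem_Ioi.2 hu), ramp, min_eq_left this]
  · simp [Set.indicator_of_notMem (Set.notMem_Ioi.2 (not_lt.1 hu)), ramp]

lemma ramp_le_indicator_Ioi {h : ℝ} (hh : 0 ≤ h) (t u : ℝ) :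
    ramp t h u ≤ (Set.Ioi t).indicator 1 u := by
  by_cases hu : t < u
  · simp [Set.indicator_of_mem (Set.mem_Ioi.2 hu), ramp]
  · have : (u - t) / h ≤ 0 := div_nonpos_of_nonpos_of_nonneg (by linarith [not_lt.1 hu]) hh
    simp [Set.indicator_of_notMem (Set.notMem_Ioi.2 (not_lt.1 hu)), ramp, this]

section

variable {X : Type*} [MeasurableSpace X]

lemma measureReal_preimage_le_integral_comp {μ : Measure X} [IsFiniteMeasure μ] {s : X → ℝ}
    (hs : Measurable s) {A : Set ℝ} (hA : MeasurableSet A) {φ : ℝ → ℝ}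
    (hφ : Integrable (φ ∘ s) μ) (hle : A.indicator 1 ≤ φ) :
    μ.real (s ⁻¹' A) ≤ ∫ x, φ (s x) ∂μ := by
  rw [← integral_indicator_one (hs hA)]
  exact integral_mono ((integrable_const 1).indicator (hs hA)) hφ fun x =>
    (Set.indicator_comp_right s).trans_le (hle (s x))

lemma integral_comp_le_measureReal_preimage {μ : Measure X} [IsFiniteMeasure μ] {s : X → ℝ}
    (hs : Measurable s) {A : Set ℝ} (hA : MeasurableSet A) {φ : ℝ → ℝ}
    (hφ : Integrable (φ ∘ s) μ) (hle : φ ≤ A.indicator 1) :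
    ∫ x, φ (s x) ∂μ ≤ μ.real (s ⁻¹' A) := by
  rw [← integral_indicator_one (hs hA)]
  exact integral_mono hφ ((integrable_const 1).indicator (hs hA)) fun x =>
    (hle (s x)).trans_eq (Set.indicator_comp_right s).symm

variable [PseudoMetricSpace X] {P Q : Measure X} {ε : ℝ}

lemma abs_integral_sub_le_of_lipschitzWith [IsProbabilityMeasure P] [IsProbabilityMeasure Q]
    (hW : ∀ g : X → ℝ, LipschitzWith 1 g → |∫ x, g x ∂P - ∫ x, g x ∂Q| ≤ ε)
    {K : NNReal} {g : X → ℝ} (hg : LipschitzWith K g) :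
    |∫ x, g x ∂P - ∫ x, g x ∂Q| ≤ K * ε := by
  rcases eq_zero_or_pos K with rfl | hK
  · obtain ⟨x₀⟩ : Nonempty X := nonempty_of_isProbabilityMeasure P
    have hconst : g = fun _ => g x₀ := funext fun x => (LipschitzWith.zero_iff g).1 hg x x₀
    rw [hconst]
    simp
  · have h1 : LipschitzWith 1 fun x => (K : ℝ)⁻¹ * g x := by
      simpa [Function.comp_def, hK.ne'] using (lipschitzWith_smul (K : ℝ)⁻¹).comp hg
    have := hW _ h1
    rw [integral_const_mul, integral_const_mul, ← mul_sub, abs_mul,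
      abs_of_pos (inv_pos.2 (NNReal.coe_pos.2 hK))] at this
    rwa [← inv_mul_le_iff₀ (NNReal.coe_pos.2 hK)]

end

theorem smoothed_indicator_shift_bound_general
    {X : Type*} [MetricSpace X] [MeasurableSpace X] [BorelSpace X]
    (P Q : Measure X) [IsProbabilityMeasure P] [IsProbabilityMeasure Q]
    (ε : ℝ)
    (hW : ∀ g : X → ℝ, LipschitzWith 1 g → |∫ x, g x ∂P - ∫ x, g x ∂Q| ≤ ε)
    (L : NNReal) (s : X → ℝ) (hs : LipschitzWith L s)
    (t h : ℝ) (hh : 0 < h) :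
    (Q {x | t + h < s x}).toReal ≤ (P {x | t < s x}).toReal + (L : ℝ) * ε / h := by
  have hs_meas : Measurable s := hs.continuous.measurable
  have hg : LipschitzWith (‖h‖₊⁻¹ * L) (ramp t h ∘ s) := (lipschitzWith_ramp t h).comp hs
  have hg_int (μ : Measure X) [IsFiniteMeasure μ] : Integrable (ramp t h ∘ s) μ :=
    .of_bound hg.continuous.aestronglyMeasurable 1 (.of_forall fun x => abs_ramp_le_one t h (s x))
  have hK : ((‖h‖₊⁻¹ * L : NNReal) : ℝ) * ε = L * ε / h := by
    push_cast
    rw [Real.norm_of_nonneg hh.le]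
    ring
  have hshift : |∫ x, ramp t h (s x) ∂P - ∫ x, ramp t h (s x) ∂Q| ≤ L * ε / h :=
    hK ▸ abs_integral_sub_le_of_lipschitzWith hW hg
  calc (Q {x | t + h < s x}).toReal ≤ ∫ x, ramp t h (s x) ∂Q :=
        measureReal_preimage_le_integral_comp hs_meas measurableSet_Ioi (hg_int Q)
          (indicator_Ioi_add_le_ramp hh t)
    _ ≤ ∫ x, ramp t h (s x) ∂P + L * ε / h := by linarith [(abs_sub_le_iff.1 hshift).2]
    _ ≤ (P {x | t < s x}).toReal + L * ε / h := by
        gcongr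
        exact integral_comp_le_measureReal_preimage hs_meas measurableSet_Ioi (hg_int P)
          (ramp_le_indicator_Ioi hh.le t)

/-- Smoothed indicator shift bound: exceedance under a Wasserstein-shifted distribution
at threshold `t + h` is controlled by exceedance under the reference distribution at
threshold `t`, plus `L ε / h`. -/
theorem smoothed_indicator_shift_bound
    {X : Type*} [MetricSpace X] [MeasurableSpace X] [BorelSpace X]
    (P Q : Measure X) [IsProbabilityMeasure P] [IsProbabilityMeasure Q]
    (ε : ℝ) (hε : 0 ≤ ε)
    (hW : ∀ g : X → ℝ, LipschitzWith 1 g → |∫ x, g x ∂P - ∫ x, g x ∂Q| ≤ ε)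
    (L : NNReal) (s : X → ℝ) (hs : LipschitzWith L s)
    (t h : ℝ) (hh : 0 < h) :
    (Q {x | t + h < s x}).toReal ≤ (P {x | t < s x}).toReal + (L : ℝ) * ε / h :=
  smoothed_indicator_shift_bound_general P Q ε hW L s hs t h hh
end
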